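/- Let 𝒜 ∈ ℂ^{2n×2n}, ℬ ∈ ℂ^{2n×2m}, 𝒞 ∈ ℂ^{2m×2n} satisfy the physical realizability conditions 𝒜 + 𝒜♭ + ℬ ℬ♭ = 0 and ℬ = -𝒞♭. Let n₁ be a nonnegative integer, Z ∈ ℂ^{n×n₁} any matrix, and T := [Z 0; 0 conj(Z)] ∈ ℂ^{2n×2n₁}. Then the reduced matrices 𝒜' := Tᴴ 𝒜 T, ℬ' := Tᴴ ℬ, 𝒞' := 𝒞 T again satisfy the physical realizability conditions: ℬ' = -(𝒞')♭ and 𝒜' + (𝒜')♭ + ℬ' (ℬ')♭ = 0, where the ♭-adjoint of the primed matrices is taken with respect to J_{n₁} and J_m. -/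

import Mathlib

open Matrix

noncomputable section

/-- `J_k = [I 0; 0 -I]` acting on `ℂ^{2k} = ℂ^k ⊕ ℂ^k`. -/
def Jmat (k : ℕ) : Matrix (Fin k ⊕ Fin k) (Fin k ⊕ Fin k) ℂ :=
  Matrix.fromBlocks 1 0 0 (-1)

/-- Entrywise complex conjugation of a matrix. -/
def mconj {α β : Type} (M : Matrix α β ℂ) : Matrix α β ℂ :=
  M.map (starRingEnd ℂ)

/-- The doubled-up matrix `Δ(U,V) = [U V; conj V  conj U]`. -/
def doubledUp {k r : ℕ} (U V : Matrix (Fin k) (Fin r) ℂ) :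
    Matrix (Fin k ⊕ Fin k) (Fin r ⊕ Fin r) ℂ :=
  Matrix.fromBlocks U V (mconj V) (mconj U)

/-- The ♭-adjoint `X♭ = J_r Xᴴ J_k` of `X ∈ ℂ^{2k×2r}`. -/
def flat {k r : ℕ} (X : Matrix (Fin k ⊕ Fin k) (Fin r ⊕ Fin r) ℂ) :
    Matrix (Fin r ⊕ Fin r) (Fin k ⊕ Fin k) ℂ :=
  Jmat r * Xᴴ * Jmat k

/-- Orthogonal complement of a subspace of `ℂ^ι` w.r.t. the standard Hermitian
inner product `⟪y, x⟫ = (star y) ⬝ᵥ x`. -/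
def orthComp {ι : Type} [Fintype ι] (S : Submodule ℂ (ι → ℂ)) : Submodule ℂ (ι → ℂ) where
  carrier := {x | ∀ y ∈ S, star y ⬝ᵥ x = 0}
  add_mem' := by
    intro a b ha hb y hy
    simp only [Set.mem_setOf_eq] at *
    rw [dotProduct_add, ha y hy, hb y hy, add_zero]
  zero_mem' := by
    intro y hy
    simp
  smul_mem' := by
    intro c x hx y hy
    simp only [Set.mem_setOf_eq] at *
    rw [dotProduct_smul, hx y hy, smul_zero]

/-- The controllable subspace `Im(C_G) = ∑_{k<2n} Im(𝒜ᵏℬ)`. -/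
def ctrbSub (n m : ℕ) (𝒜 : Matrix (Fin n ⊕ Fin n) (Fin n ⊕ Fin n) ℂ)
    (ℬ : Matrix (Fin n ⊕ Fin n) (Fin m ⊕ Fin m) ℂ) : Submodule ℂ (Fin n ⊕ Fin n → ℂ) :=
  ⨆ k ∈ Finset.range (2 * n), LinearMap.range ((𝒜 ^ k * ℬ).mulVecLin)

/-- The unobservable subspace `Ker(O_G) = ⋂_{k<2n} Ker(𝒞𝒜ᵏ)`. -/
def unobsSub (n m : ℕ) (𝒜 : Matrix (Fin n ⊕ Fin n) (Fin n ⊕ Fin n) ℂ)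
    (𝒞 : Matrix (Fin m ⊕ Fin m) (Fin n ⊕ Fin n) ℂ) : Submodule ℂ (Fin n ⊕ Fin n → ℂ) :=
  ⨅ k ∈ Finset.range (2 * n), LinearMap.ker ((𝒞 * 𝒜 ^ k).mulVecLin)

/-! Since `J` is Hermitian with `J² = 1`, the ♭-adjoint is an anti-multiplicative involution, and a
block-diagonal `T` commutes with `J`, so `T♭ = Tᴴ`. Hence the ♭-adjoint of each reduced matrix is
the reduction of the ♭-adjoint of the original one, and both identities follow from the original
ones by the congruence `X ↦ Tᴴ X T`. -/

lemma Jmat_mul_self (k : ℕ) : Jmat k * Jmat k = 1 := by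
  simp [Jmat, fromBlocks_multiply, fromBlocks_one]

lemma conjTranspose_Jmat (k : ℕ) : (Jmat k)ᴴ = Jmat k := by
  simp [Jmat, fromBlocks_conjTranspose]

lemma flat_mul {k r s : ℕ} (X : Matrix (Fin k ⊕ Fin k) (Fin r ⊕ Fin r) ℂ)
    (Y : Matrix (Fin r ⊕ Fin r) (Fin s ⊕ Fin s) ℂ) : flat (X * Y) = flat Y * flat X := by
  calc flat (X * Y) = Jmat s * Yᴴ * (Jmat r * Jmat r) * Xᴴ * Jmat k := by
        simp [flat, Jmat_mul_self, conjTranspose_mul, Matrix.mul_assoc]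
    _ = flat Y * flat X := by simp only [flat, Matrix.mul_assoc]

lemma flat_flat {k r : ℕ} (X : Matrix (Fin k ⊕ Fin k) (Fin r ⊕ Fin r) ℂ) : flat (flat X) = X := by
  calc flat (flat X) = (Jmat k * Jmat k) * X * (Jmat r * Jmat r) := by
        simp only [flat, conjTranspose_mul, conjTranspose_Jmat, conjTranspose_conjTranspose,
          Matrix.mul_assoc]
    _ = X := by simp [Jmat_mul_self]

lemma flat_fromBlocks_zero_zero {k r : ℕ} (A : Matrix (Fin k) (Fin r) ℂ)
    (D : Matrix (Fin k) (Fin r) ℂ) : flat (fromBlocks A 0 0 D) = (fromBlocks A 0 0 D)ᴴ := by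
  simp [flat, Jmat, fromBlocks_conjTranspose, fromBlocks_multiply]

theorem reduced_physical_realizability_general
    (n m n₁ : ℕ)
    (𝒜 : Matrix (Fin n ⊕ Fin n) (Fin n ⊕ Fin n) ℂ)
    (ℬ : Matrix (Fin n ⊕ Fin n) (Fin m ⊕ Fin m) ℂ)
    (𝒞 : Matrix (Fin m ⊕ Fin m) (Fin n ⊕ Fin n) ℂ)
    (hPR1 : 𝒜 + flat 𝒜 + ℬ * flat ℬ = 0) (hPR2 : ℬ = -flat 𝒞)
    (Z : Matrix (Fin n) (Fin n₁) ℂ)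
    (T : Matrix (Fin n ⊕ Fin n) (Fin n₁ ⊕ Fin n₁) ℂ)
    (hT : T = Matrix.fromBlocks Z 0 0 (mconj Z)) :
    Tᴴ * ℬ = -flat (𝒞 * T) ∧
    Tᴴ * 𝒜 * T + flat (Tᴴ * 𝒜 * T) + (Tᴴ * ℬ) * flat (Tᴴ * ℬ) = 0 := by
  have hflatT : flat T = Tᴴ := hT ▸ flat_fromBlocks_zero_zero Z (mconj Z)
  have hflatTH : flat Tᴴ = T := by rw [← hflatT, flat_flat]
  constructor
  · rw [flat_mul, hflatT, hPR2, Matrix.mul_neg]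
  · calc Tᴴ * 𝒜 * T + flat (Tᴴ * 𝒜 * T) + (Tᴴ * ℬ) * flat (Tᴴ * ℬ)
          = Tᴴ * (𝒜 + flat 𝒜 + ℬ * flat ℬ) * T := by
            simp only [flat_mul, hflatT, hflatTH, Matrix.mul_add, Matrix.add_mul,
              Matrix.mul_assoc]
      _ = 0 := by rw [hPR1, Matrix.mul_zero, Matrix.zero_mul]

/-- **Physical realizability of the reduced `co` subsystem (Remark 2).** If
`𝒜 + 𝒜♭ + ℬℬ♭ = 0` and `ℬ = -𝒞♭`, then for any `Z ∈ ℂ^{n×n₁}` and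
`T = [Z 0; 0 conj Z]`, the reduced matrices `𝒜' = Tᴴ𝒜T`, `ℬ' = Tᴴℬ`, `𝒞' = 𝒞T`
again satisfy `ℬ' = -(𝒞')♭` and `𝒜' + (𝒜')♭ + ℬ'(ℬ')♭ = 0`. -/
theorem reduced_physical_realizability
    (n m n₁ : ℕ) (hn : 0 < n) (hm : 0 < m)
    (𝒜 : Matrix (Fin n ⊕ Fin n) (Fin n ⊕ Fin n) ℂ)
    (ℬ : Matrix (Fin n ⊕ Fin n) (Fin m ⊕ Fin m) ℂ)
    (𝒞 : Matrix (Fin m ⊕ Fin m) (Fin n ⊕ Fin n) ℂ)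
    (hPR1 : 𝒜 + flat 𝒜 + ℬ * flat ℬ = 0) (hPR2 : ℬ = -flat 𝒞)
    (Z : Matrix (Fin n) (Fin n₁) ℂ)
    (T : Matrix (Fin n ⊕ Fin n) (Fin n₁ ⊕ Fin n₁) ℂ)
    (hT : T = Matrix.fromBlocks Z 0 0 (mconj Z)) :
    Tᴴ * ℬ = -flat (𝒞 * T) ∧
    Tᴴ * 𝒜 * T + flat (Tᴴ * 𝒜 * T) + (Tᴴ * ℬ) * flat (Tᴴ * ℬ) = 0 :=
  reduced_physical_realizability_general n m n₁ 𝒜 ℬ 𝒞 hPR1 hPR2 Z T hT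

end
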